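/- For integers 1 ≤ n ≤ k, the set of integer n×k matrices of full rank n is generic: the asymptotic density, with respect to the ball stratification of Z^{nk} by sup-norm balls, of {A ∈ Z^{n×k} : rank(A) = n} equals 1; equivalently, for every s with 1 ≤ s ≤ n−1 the set {A ∈ Z^{n×k} : rank(A) = s} has asymptotic density 0. -/

import Mathlib

/-!
If the minor of `A` on the first `n` columns is nonzero then `rank A = n`. That minor is a
nonzero polynomial of degree `n` in the `nk` entries, so by the Schwartz–Zippel lemma it vanishes
on at most `n (2r+1)^(nk-1)` points of the ball `B_r`: the rank-deficient matrices have density at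
most `n / (2r+1) → 0`. The full-rank matrices are their complement, and each rank `s < n` is
a subset of them.
-/

open Filter Finset MvPolynomial Topology

namespace MvPolynomial

variable {σ R : Type*} [Fintype σ] [DecidableEq σ] [CommRing R] [IsDomain R] [DecidableEq R]

/-- The Schwartz–Zippel lemma for an arbitrary finite type of variables. -/
theorem card_zeros_mul_card_le {p : MvPolynomial σ R} (hp : p ≠ 0) (S : Finset R) :
    #{x ∈ Fintype.piFinset fun _ ↦ S | eval x p = 0} * #S ≤
      p.totalDegree * #S ^ Fintype.card σ := by
  set e := Fintype.equivFin σ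
  set q := rename e p
  have hq : q ≠ 0 := (map_ne_zero_iff _ (rename_injective _ e.injective)).mpr hp
  have hzeros : #{x ∈ Fintype.piFinset fun _ ↦ S | eval x p = 0} =
      #{y ∈ Fintype.piFinset fun _ ↦ S | eval y q = 0} :=
    card_equiv (e.arrowCongr (Equiv.refl R)) fun x ↦ by
      simp [q, eval_rename, Function.comp_def, e.symm.forall_congr_right (q := (x · ∈ S))]
  obtain hS | hS := (#S).eq_zero_or_pos
  · simp [hS]
  have hSZ := schwartz_zippel_totalDegree hq S
  rw [div_le_div_iff₀ (by positivity) (by positivity), ← hzeros] at hSZ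
  calc _ ≤ q.totalDegree * #S ^ Fintype.card σ := by exact_mod_cast hSZ
    _ ≤ p.totalDegree * #S ^ Fintype.card σ := by
        gcongr
        exact totalDegree_rename_le _ _

end MvPolynomial

variable {σ : Type*} [Fintype σ] [DecidableEq σ]

variable (σ) in
noncomputable def intBall (r : ℕ) : Finset (σ → ℤ) :=
  Fintype.piFinset fun _ ↦ Icc (-(r : ℤ)) r

theorem mem_intBall {r : ℕ} {x : σ → ℤ} : x ∈ intBall σ r ↔ ∀ i, |x i| ≤ r := by
  simp [intBall, abs_le]

theorem card_intBall (r : ℕ) : #(intBall σ r) = (2 * r + 1) ^ Fintype.card σ := by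
  simp only [intBall, Fintype.card_piFinset, Int.card_Icc, prod_const, card_univ]
  congr 1
  omega

/-- The proportion `|M ∩ B_r| / |B_r|` for `M = {x | P x}` and `B_r = intBall σ r`. -/
noncomputable def ballDensity (P : (σ → ℤ) → Prop) [DecidablePred P] (r : ℕ) : ℝ :=
  #{x ∈ intBall σ r | P x} / #(intBall σ r)

theorem ballDensity_nonneg (P : (σ → ℤ) → Prop) [DecidablePred P] (r : ℕ) :
    0 ≤ ballDensity P r := by
  unfold ballDensity; positivity

theorem ballDensity_mono {P Q : (σ → ℤ) → Prop} [DecidablePred P] [DecidablePred Q]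
    (h : ∀ x, P x → Q x) (r : ℕ) : ballDensity P r ≤ ballDensity Q r := by
  unfold ballDensity
  gcongr
  exact h _

theorem ballDensity_not (P : (σ → ℤ) → Prop) [DecidablePred P] (r : ℕ) :
    ballDensity (¬ P ·) r = 1 - ballDensity P r := by
  have hpos : (0 : ℝ) < #(intBall σ r) := by
    rw [card_intBall]; positivity
  rw [ballDensity, ballDensity, eq_sub_iff_add_eq, ← add_div, div_eq_one_iff_eq hpos.ne',
    ← Nat.cast_add, add_comm, card_filter_add_card_filter_not]

theorem MvPolynomial.tendsto_ballDensity_eval_eq_zero {p : MvPolynomial σ ℤ} (hp : p ≠ 0) :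
    Tendsto (ballDensity (eval · p = 0)) atTop (𝓝 0) := by
  have hbound (r : ℕ) : ballDensity (eval · p = 0) r ≤ p.totalDegree / (2 * r + 1) := by
    have hSZ := card_zeros_mul_card_le hp (Icc (-(r : ℤ)) r)
    rw [Int.card_Icc, show ((r : ℤ) + 1 - -r).toNat = 2 * r + 1 by omega] at hSZ
    rw [ballDensity, card_intBall, div_le_div_iff₀ (by positivity) (by positivity)]
    exact_mod_cast hSZ
  have hlin : Tendsto (fun r : ℕ ↦ 2 * (r : ℝ) + 1) atTop atTop :=
    tendsto_atTop_add_const_right _ _ <| tendsto_natCast_atTop_atTop.const_mul_atTop two_pos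
  exact squeeze_zero (ballDensity_nonneg _) hbound (tendsto_const_nhds.div_atTop hlin)

namespace Matrix

variable {m n : Type*} [Fintype m] [DecidableEq m]

theorem rank_eq_card_height_of_det_submatrix_ne_zero [Fintype n] {R : Type*} [CommRing R]
    [IsDomain R] (A : Matrix m n R) (c : m → n) (h : (A.submatrix id c).det ≠ 0) :
    A.rank = Fintype.card m :=
  (rank_le_card_height A).antisymm <|
    (rank_of_det_ne_zero h).symm.le.trans (rank_submatrix_le _ _ _)

noncomputable def minorPoly (R : Type*) [CommRing R] (c : m → n) : MvPolynomial (m × n) R :=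
  rename (Prod.map id c) (mvPolynomialX m m R).det

theorem eval_minorPoly {R : Type*} [CommRing R] (c : m → n) (x : m × n → R) :
    eval x (minorPoly R c) = ((of (Function.curry x)).submatrix id c).det := by
  rw [minorPoly, eval_rename, RingHom.map_det]
  congr 1
  ext i j
  simp [mvPolynomialX]

theorem minorPoly_ne_zero {R : Type*} [CommRing R] [Nontrivial R] {c : m → n}
    (hc : Function.Injective c) : minorPoly R c ≠ 0 :=
  (map_ne_zero_iff _ (rename_injective _ (Function.injective_id.prodMap hc))).mpr
    (det_mvPolynomialX_ne_zero m R)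

variable [Fintype n] [DecidableEq n]

theorem ncard_setOf_and_abs_le_div (P : Matrix m n ℤ → Prop) [DecidablePred P] (r : ℕ) :
    (Set.ncard {A : Matrix m n ℤ | P A ∧ ∀ i j, |A i j| ≤ r} : ℝ) /
        (2 * r + 1) ^ (Fintype.card m * Fintype.card n) =
      ballDensity (fun x : m × n → ℤ ↦ P (of (Function.curry x))) r := by
  have hset : {A : Matrix m n ℤ | P A ∧ ∀ i j, |A i j| ≤ r} =
      (fun x ↦ of (Function.curry x)) ''
        ↑({x ∈ intBall (m × n) r | P (of (Function.curry x))}) := by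
    ext A
    simp only [Set.mem_ofPred_eq, coe_filter, mem_intBall, Prod.forall, Set.mem_image]
    refine ⟨fun ⟨hP, hA⟩ ↦ ⟨Function.uncurry A, ⟨hA, hP⟩, rfl⟩, ?_⟩
    rintro ⟨x, ⟨hx, hP⟩, rfl⟩
    exact ⟨hP, hx⟩
  have hinj : Function.Injective fun x : m × n → ℤ ↦ of (Function.curry x) :=
    of.injective.comp (Equiv.curry _ _ _).injective
  rw [ballDensity, card_intBall, hset, Set.ncard_image_of_injective _ hinj, Set.ncard_coe_finset]
  push_cast [Fintype.card_prod]
  rfl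

theorem tendsto_ballDensity_rank_ne (h : Fintype.card m ≤ Fintype.card n) :
    Tendsto (ballDensity fun x : m × n → ℤ ↦
      ((of (Function.curry x)).map ((↑) : ℤ → ℚ)).rank ≠ Fintype.card m) atTop (𝓝 0) := by
  obtain ⟨c⟩ := Function.Embedding.nonempty_of_card_le h
  refine squeeze_zero (ballDensity_nonneg _) (ballDensity_mono fun x hx ↦ ?_)
    (tendsto_ballDensity_eval_eq_zero (minorPoly_ne_zero (R := ℤ) c.injective))
  rw [eval_minorPoly]
  by_contra hdet
  refine hx (rank_eq_card_height_of_det_submatrix_ne_zero _ c ?_)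
  rwa [submatrix_map, ← Int.cast_det, Int.cast_ne_zero]

end Matrix

theorem full_rank_generic_general (n k : ℕ) (hnk : n ≤ k) :
    Tendsto (fun r : ℕ =>
      ((Set.ncard {A : Matrix (Fin n) (Fin k) ℤ |
          (A.map ((↑) : ℤ → ℚ)).rank = n ∧ ∀ i j, |A i j| ≤ (r : ℤ)} : ℝ) /
        (2 * (r : ℝ) + 1) ^ (n * k))) atTop (nhds 1)
    ∧ ∀ s : ℕ, 1 ≤ s → s ≤ n - 1 →
      Tendsto (fun r : ℕ =>
        ((Set.ncard {A : Matrix (Fin n) (Fin k) ℤ |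
            (A.map ((↑) : ℤ → ℚ)).rank = s ∧ ∀ i j, |A i j| ≤ (r : ℤ)} : ℝ) /
          (2 * (r : ℝ) + 1) ^ (n * k))) atTop (nhds 0) := by
  have hdensity := Matrix.ncard_setOf_and_abs_le_div (m := Fin n) (n := Fin k)
  have hdeficient := Matrix.tendsto_ballDensity_rank_ne (m := Fin n) (n := Fin k) (by simpa)
  simp only [Fintype.card_fin] at hdensity
  simp only [hdensity]
  refine ⟨?_, fun s hs1 hsn ↦ ?_⟩
  · simpa [ballDensity_not] using (tendsto_const_nhds (x := (1 : ℝ))).sub hdeficient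
  · refine squeeze_zero (ballDensity_nonneg _) (ballDensity_mono fun x hx ↦ ?_) hdeficient
    rw [hx, Fintype.card_fin]
    omega

/-- For `1 ≤ n ≤ k`, the set of integer `n × k` matrices of full rank `n`
is generic with respect to the ball stratification of `Z^{nk}` by sup-norm balls;
equivalently, for each `1 ≤ s ≤ n - 1` the set of matrices of rank `s` has density 0. -/
theorem full_rank_generic (n k : ℕ) (hn : 1 ≤ n) (hnk : n ≤ k) :
    Tendsto (fun r : ℕ =>
      ((Set.ncard {A : Matrix (Fin n) (Fin k) ℤ |
          (A.map ((↑) : ℤ → ℚ)).rank = n ∧ ∀ i j, |A i j| ≤ (r : ℤ)} : ℝ) /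
        (2 * (r : ℝ) + 1) ^ (n * k))) atTop (nhds 1)
    ∧ ∀ s : ℕ, 1 ≤ s → s ≤ n - 1 →
      Tendsto (fun r : ℕ =>
        ((Set.ncard {A : Matrix (Fin n) (Fin k) ℤ |
            (A.map ((↑) : ℤ → ℚ)).rank = s ∧ ∀ i j, |A i j| ≤ (r : ℤ)} : ℝ) /
          (2 * (r : ℝ) + 1) ^ (n * k))) atTop (nhds 0) :=
  full_rank_generic_general n k hnk
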